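/- arXiv:2308.09261 — 2 statements merged into one kernel-verified Lean document; each statement's English description precedes it below -/
import Mathlib

section
/- Let B and C be bounded linear operators on H admitting A-adjoints B♯ and C♯. Then (w_{A,e}(B,C))² ≤ (1/√2)·w_A( (B♯B + C♯C) + i(BB♯ + CC♯) ). -/
noncomputable section

open scoped ComplexInnerProductSpace

variable {H : Type*} [NormedAddCommGroup H] [InnerProductSpace ℂ H] [CompleteSpace H]

/-- The semi-inner product induced by a positive operator `A`:
`⟨x,y⟩_A = ⟨Ax,y⟩` (linear in the first argument, following the paper's convention). -/
def innerA (A : H →L[ℂ] H) (x y : H) : ℂ := ⟪y, A x⟫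

/-- The seminorm induced by `A`: `‖x‖_A = ⟨Ax,x⟩^{1/2}`. -/
def normA (A : H →L[ℂ] H) (x : H) : ℝ := Real.sqrt (innerA A x x).re

/-- The `A`-numerical radius `w_A(T) = sup { |⟨Tx,x⟩_A| : ‖x‖_A = 1 }`. -/
def wA (A T : H →L[ℂ] H) : ℝ :=
  sSup {r : ℝ | ∃ x : H, normA A x = 1 ∧ r = ‖innerA A (T x) x‖}

/-- The `A`-Crawford number `c_A(T) = inf { |⟨Tx,x⟩_A| : ‖x‖_A = 1 }`. -/
def cA (A T : H →L[ℂ] H) : ℝ :=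
  sInf {r : ℝ | ∃ x : H, normA A x = 1 ∧ r = ‖innerA A (T x) x‖}

/-- The `A`-operator seminorm `‖T‖_A = sup { ‖Tx‖_A : ‖x‖_A = 1 }`. -/
def opNormA (A T : H →L[ℂ] H) : ℝ :=
  sSup {r : ℝ | ∃ x : H, normA A x = 1 ∧ r = normA A (T x)}

/-- The `A`-Euclidean operator radius of the pair `(B, C)`. -/
def wAe (A B C : H →L[ℂ] H) : ℝ :=
  sSup {r : ℝ | ∃ x : H, normA A x = 1 ∧
    r = Real.sqrt (‖innerA A (B x) x‖^2 + ‖innerA A (C x) x‖^2)}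

/-- The `A`-Euclidean operator seminorm of the pair `(B, C)`. -/
def normAe (A B C : H →L[ℂ] H) : ℝ :=
  sSup {r : ℝ | ∃ x : H, normA A x = 1 ∧
    r = Real.sqrt ((normA A (B x))^2 + (normA A (C x))^2)}

/-- `Re_A(T) = (T + T♯)/2`, where `Ts` is an `A`-adjoint of `T`. -/
def ReA (T Ts : H →L[ℂ] H) : H →L[ℂ] H := (2 : ℂ)⁻¹ • (T + Ts)

/-- `Im_A(T) = (T - T♯)/(2i)`, where `Ts` is an `A`-adjoint of `T`. -/
def ImA (T Ts : H →L[ℂ] H) : H →L[ℂ] H := (2 * Complex.I)⁻¹ • (T - Ts)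


/-! For an `A`-unit vector `x`, Cauchy–Schwarz for `⟨·,·⟩_A` gives
`|⟨Bx,x⟩_A|² ≤ ‖Bx‖_A² = ⟨B♯Bx,x⟩_A`, and since `|⟨Bx,x⟩_A| = |⟨B♯x,x⟩_A|` also
`|⟨Bx,x⟩_A|² ≤ ‖B♯x‖_A² = ⟨BB♯x,x⟩_A`; likewise for `C`. Hence
`s = |⟨Bx,x⟩_A|² + |⟨Cx,x⟩_A|²` is at most both the real and the imaginary part of
`⟨Tx,x⟩_A`, where `T = (B♯B + C♯C) + i(BB♯ + CC♯)`, so `√2 s ≤ |⟨Tx,x⟩_A| ≤ w_A(T)`.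

Since `sSup` of an unbounded set of reals is `0`, one also needs `w_A(T)` to be a genuine
supremum. This rests on `‖Px‖_A ≤ ‖P‖ ‖x‖_A` for every `P` with `P♯ = P`, obtained by iterating
`‖P^k x‖_A² ≤ ‖P^{2k} x‖_A ‖x‖_A` along `k = 2ⁿ`. -/

open ContinuousLinearMap

theorem le_of_forall_pow_two_pow_le_mul_pow {x r M : ℝ} (hr : 0 ≤ r)
    (h : ∀ n : ℕ, x ^ 2 ^ n ≤ M * r ^ 2 ^ n) : x ≤ r := by
  by_contra! hrx
  have hx : 0 < x := hr.trans_lt hrx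
  have hlim : Filter.Tendsto (fun n : ℕ => M * (r / x) ^ 2 ^ n) Filter.atTop (nhds 0) := by
    simpa using ((tendsto_pow_atTop_nhds_zero_of_lt_one (div_nonneg hr hx.le)
      ((div_lt_one hx).2 hrx)).comp (tendsto_pow_atTop_atTop_of_one_lt one_lt_two)).const_mul M
  have hone : ∀ n : ℕ, 1 ≤ M * (r / x) ^ 2 ^ n := fun n => by
    rw [div_pow, mul_div_assoc', le_div_iff₀ (by positivity), one_mul]
    exact h n
  linarith [ge_of_tendsto' hlim hone]

theorem le_of_sq_le_double_of_le_mul_pow {u : ℕ → ℝ} {r M : ℝ} (hu : ∀ n, 0 ≤ u n) (hr : 0 ≤ r)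
    (hsq : ∀ k, u k ^ 2 ≤ u (2 * k)) (hbound : ∀ n, u n ≤ M * r ^ n) : u 1 ≤ r := by
  refine le_of_forall_pow_two_pow_le_mul_pow hr fun n => le_trans ?_ (hbound _)
  induction n with
  | zero => simp
  | succ n ih =>
    calc u 1 ^ 2 ^ (n + 1) = (u 1 ^ 2 ^ n) ^ 2 := by rw [pow_succ, pow_mul]
      _ ≤ u (2 ^ n) ^ 2 := pow_le_pow_left₀ (pow_nonneg (hu 1) _) ih 2
      _ ≤ u (2 ^ (n + 1)) := by rw [pow_succ' 2 n]; exact hsq _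

section SemiInner

variable {A : H →L[ℂ] H}

omit [CompleteSpace H] in
theorem innerA_add_left (x y z : H) : innerA A (x + y) z = innerA A x z + innerA A y z := by
  simp only [innerA, map_add, inner_add_right]

omit [CompleteSpace H] in
theorem innerA_smul_left (c : ℂ) (x y : H) : innerA A (c • x) y = c * innerA A x y := by
  simp only [innerA, map_smul, inner_smul_right]

theorem conj_innerA (hA : IsSelfAdjoint A) (x y : H) :
    starRingEnd ℂ (innerA A x y) = innerA A y x := by
  rw [innerA, innerA, inner_conj_symm, ← adjoint_inner_left, hA.adjoint_eq]

theorem innerA_eq_inner_sqrt (hA : A.IsPositive) (x y : H) :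
    innerA A x y = ⟪CFC.sqrt A y, CFC.sqrt A x⟫ := by
  have hS : IsSelfAdjoint (CFC.sqrt A) :=
    ((nonneg_iff_isPositive _).1 (CFC.sqrt_nonneg A)).isSelfAdjoint
  rw [innerA, ← adjoint_inner_right, hS.adjoint_eq]
  conv_lhs => rw [← CFC.sqrt_mul_sqrt_self A ((nonneg_iff_isPositive A).2 hA)]
  rfl

theorem normA_eq_norm_sqrt (hA : A.IsPositive) (x : H) : normA A x = ‖CFC.sqrt A x‖ := by
  rw [normA, innerA_eq_inner_sqrt hA, ← RCLike.re_to_complex, inner_self_eq_norm_sq,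
    Real.sqrt_sq (norm_nonneg _)]

theorem innerA_self (hA : A.IsPositive) (x : H) : innerA A x x = ((normA A x ^ 2 : ℝ) : ℂ) := by
  rw [innerA_eq_inner_sqrt hA, normA_eq_norm_sqrt hA, inner_self_eq_norm_sq_to_K]
  push_cast
  rfl

theorem norm_innerA_le (hA : A.IsPositive) (x y : H) :
    ‖innerA A x y‖ ≤ normA A x * normA A y := by
  rw [innerA_eq_inner_sqrt hA, normA_eq_norm_sqrt hA, normA_eq_norm_sqrt hA, mul_comm]
  exact norm_inner_le_norm _ _

theorem normA_le (hA : A.IsPositive) (x : H) : normA A x ≤ ‖CFC.sqrt A‖ * ‖x‖ := by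
  rw [normA_eq_norm_sqrt hA]
  exact le_opNorm _ _

theorem sq_norm_innerA_apply_self_le (hA : A.IsPositive) (T : H →L[ℂ] H) {x : H}
    (hx : normA A x = 1) : ‖innerA A (T x) x‖ ^ 2 ≤ normA A (T x) ^ 2 := by
  gcongr
  simpa [hx] using norm_innerA_le hA (T x) x

theorem exists_normA_eq_one (hA : A.IsPositive) (hA0 : A ≠ 0) : ∃ x, normA A x = 1 := by
  obtain ⟨y, hy⟩ : ∃ y, CFC.sqrt A y ≠ 0 := by
    by_contra! h
    apply hA0
    rw [← CFC.sqrt_mul_sqrt_self A ((nonneg_iff_isPositive A).2 hA),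
      show CFC.sqrt A = 0 from ContinuousLinearMap.ext h, zero_mul]
  refine ⟨(‖CFC.sqrt A y‖ : ℂ)⁻¹ • y, ?_⟩
  rw [normA_eq_norm_sqrt hA, map_smul, norm_smul]
  simp [hy]

end SemiInner

def IsAAdjoint (A T Ts : H →L[ℂ] H) : Prop := A * Ts = adjoint T * A

namespace IsAAdjoint

variable {A T Ts : H →L[ℂ] H}

theorem mul {U Us : H →L[ℂ] H} (hT : IsAAdjoint A T Ts) (hU : IsAAdjoint A U Us) :
    IsAAdjoint A (T * U) (Us * Ts) := by
  rw [IsAAdjoint, ← mul_assoc, hU, mul_assoc, hT, ← mul_assoc, ← star_eq_adjoint,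
    ← star_eq_adjoint, ← star_eq_adjoint, star_mul]

theorem pow (hT : IsAAdjoint A T Ts) (n : ℕ) : IsAAdjoint A (T ^ n) (Ts ^ n) := by
  induction n with
  | zero => simp [IsAAdjoint, ← star_eq_adjoint]
  | succ n ih => rw [pow_succ, pow_succ']; exact ih.mul hT

theorem symm (hA : IsSelfAdjoint A) (hT : IsAAdjoint A T Ts) : IsAAdjoint A Ts T := by
  have h := congrArg star hT
  rw [star_mul, star_mul, ← star_eq_adjoint T, star_star, hA.star_eq] at h
  rw [IsAAdjoint, ← h, star_eq_adjoint]

theorem innerA_apply_left (hT : IsAAdjoint A T Ts) (x y : H) :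
    innerA A (Ts x) y = innerA A x (T y) := by
  rw [innerA, innerA, ← mul_apply_eq_comp, hT, mul_apply_eq_comp, adjoint_inner_right]

theorem norm_innerA_apply_self (hA : IsSelfAdjoint A) (hT : IsAAdjoint A T Ts) (x : H) :
    ‖innerA A (Ts x) x‖ = ‖innerA A (T x) x‖ := by
  rw [hT.innerA_apply_left, ← conj_innerA hA, Complex.norm_conj]

theorem normA_apply_le_norm (hA : A.IsPositive) (hT : IsAAdjoint A T T) {x : H}
    (hx : normA A x = 1) : normA A (T x) ≤ ‖T‖ := by
  set u : ℕ → ℝ := fun k => normA A ((T ^ k) x)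
  have hsq : ∀ k, u k ^ 2 ≤ u (2 * k) := fun k => by
    have h := norm_innerA_le hA x ((T ^ k) ((T ^ k) x))
    rw [hx, one_mul, ← (hT.pow k).innerA_apply_left, innerA_self hA, Complex.norm_real,
      Real.norm_of_nonneg (sq_nonneg _)] at h
    simpa only [u, two_mul, pow_add, mul_apply_eq_comp] using h
  have hpow : ∀ n, ‖T ^ n‖ ≤ ‖T‖ ^ n
    | 0 => by rw [pow_zero, pow_zero]; exact norm_id_le
    | n + 1 => norm_pow_le' _ n.succ_pos
  have hbound : ∀ n, u n ≤ (‖CFC.sqrt A‖ * ‖x‖) * ‖T‖ ^ n := fun n =>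
    calc u n ≤ ‖CFC.sqrt A‖ * ‖(T ^ n) x‖ := normA_le hA _
      _ ≤ ‖CFC.sqrt A‖ * (‖T ^ n‖ * ‖x‖) := by gcongr; exact le_opNorm _ _
      _ ≤ ‖CFC.sqrt A‖ * (‖T‖ ^ n * ‖x‖) := by gcongr; exact hpow n
      _ = _ := by ring
  simpa only [u, pow_one] using
    le_of_sq_le_double_of_le_mul_pow (u := u) (fun n => Real.sqrt_nonneg _) (norm_nonneg T)
      hsq hbound

theorem innerA_mul_apply_self (hA : A.IsPositive) (hT : IsAAdjoint A T Ts) (x : H) :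
    innerA A ((Ts * T) x) x = ((normA A (T x) ^ 2 : ℝ) : ℂ) := by
  rw [mul_apply_eq_comp, hT.innerA_apply_left, innerA_self hA]

theorem normA_apply_sq_le_norm_mul (hA : A.IsPositive) (hT : IsAAdjoint A T Ts) {x : H}
    (hx : normA A x = 1) : normA A (T x) ^ 2 ≤ ‖Ts * T‖ :=
  calc normA A (T x) ^ 2 = ‖innerA A ((Ts * T) x) x‖ := by
        rw [hT.innerA_mul_apply_self hA, Complex.norm_real, Real.norm_of_nonneg (sq_nonneg _)]
    _ ≤ normA A ((Ts * T) x) * normA A x := norm_innerA_le hA _ _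
    _ ≤ ‖Ts * T‖ := by
        rw [hx, mul_one]
        exact ((hT.symm hA.isSelfAdjoint).mul hT).normA_apply_le_norm hA hx

theorem sq_norm_innerA_apply_self_le_adjoint (hA : A.IsPositive) (hT : IsAAdjoint A T Ts) {x : H}
    (hx : normA A x = 1) : ‖innerA A (T x) x‖ ^ 2 ≤ normA A (Ts x) ^ 2 := by
  rw [← hT.norm_innerA_apply_self hA.isSelfAdjoint]
  exact sq_norm_innerA_apply_self_le hA Ts hx

theorem innerA_mul_add_I_smul_mul_apply_self (hA : A.IsPositive) (hT : IsAAdjoint A T Ts)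
    (x : H) : innerA A ((Ts * T + Complex.I • (T * Ts)) x) x =
      ⟨normA A (T x) ^ 2, normA A (Ts x) ^ 2⟩ := by
  rw [add_apply, smul_apply, innerA_add_left, innerA_smul_left, hT.innerA_mul_apply_self hA,
    (hT.symm hA.isSelfAdjoint).innerA_mul_apply_self hA]
  apply Complex.ext <;> simp [-Complex.ofReal_pow]

end IsAAdjoint

theorem le_inv_sqrt_two_mul_norm {z : ℂ} {s : ℝ} (hs : 0 ≤ s) (hre : s ≤ z.re) (him : s ≤ z.im) :
    s ≤ (√2)⁻¹ * ‖z‖ := by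
  rw [le_inv_mul_iff₀ (Real.sqrt_pos.2 two_pos), ← Real.sqrt_sq (norm_nonneg z), Complex.sq_norm,
    Real.le_sqrt (mul_nonneg (Real.sqrt_nonneg 2) hs) (Complex.normSq_nonneg z), mul_pow,
    Real.sq_sqrt zero_le_two, Complex.normSq_apply]
  nlinarith

omit [CompleteSpace H] in
theorem norm_innerA_le_wA {A T : H →L[ℂ] H} {K : ℝ}
    (hK : ∀ x, normA A x = 1 → ‖innerA A (T x) x‖ ≤ K) {x : H} (hx : normA A x = 1) :
    ‖innerA A (T x) x‖ ≤ wA A T :=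
  le_csSup ⟨K, by rintro r ⟨y, hy, rfl⟩; exact hK y hy⟩ ⟨x, hx, rfl⟩

omit [CompleteSpace H] in
theorem wAe_sq_le {A B C : H →L[ℂ] H} {c : ℝ} (hne : ∃ x, normA A x = 1)
    (h : ∀ x, normA A x = 1 → ‖innerA A (B x) x‖ ^ 2 + ‖innerA A (C x) x‖ ^ 2 ≤ c) :
    wAe A B C ^ 2 ≤ c := by
  obtain ⟨x₀, hx₀⟩ := hne
  have hub : ∀ r ∈ {r : ℝ | ∃ x : H, normA A x = 1 ∧
      r = √(‖innerA A (B x) x‖ ^ 2 + ‖innerA A (C x) x‖ ^ 2)}, r ≤ √c := by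
    rintro r ⟨x, hx, rfl⟩
    exact Real.sqrt_le_sqrt (h x hx)
  have hle : wAe A B C ≤ √c := csSup_le ⟨_, x₀, hx₀, rfl⟩ hub
  have hnonneg : 0 ≤ wAe A B C := (Real.sqrt_nonneg _).trans (le_csSup ⟨√c, hub⟩ ⟨x₀, hx₀, rfl⟩)
  calc wAe A B C ^ 2 ≤ √c ^ 2 := pow_le_pow_left₀ hnonneg hle 2
    _ = c := Real.sq_sqrt ((by positivity : (0 : ℝ) ≤ _).trans (h x₀ hx₀))

theorem stmt1 (A : H →L[ℂ] H) (hA : A.IsPositive) (hA0 : A ≠ 0)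
    (B C Bs Cs : H →L[ℂ] H)
    (hB : A.comp Bs = (ContinuousLinearMap.adjoint B).comp A)
    (hC : A.comp Cs = (ContinuousLinearMap.adjoint C).comp A) :
    (wAe A B C)^2
      ≤ (Real.sqrt 2)⁻¹ * wA A ((Bs * B + Cs * C) + Complex.I • (B * Bs + C * Cs)) := by
  have hB : IsAAdjoint A B Bs := hB
  have hC : IsAAdjoint A C Cs := hC
  set T := (Bs * B + Cs * C) + Complex.I • (B * Bs + C * Cs) with hT
  have hval : ∀ x, innerA A (T x) x =
      ⟨normA A (B x) ^ 2 + normA A (C x) ^ 2, normA A (Bs x) ^ 2 + normA A (Cs x) ^ 2⟩ := by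
    intro x
    rw [hT, show (Bs * B + Cs * C) + Complex.I • (B * Bs + C * Cs)
        = (Bs * B + Complex.I • (B * Bs)) + (Cs * C + Complex.I • (C * Cs)) by module,
      add_apply, innerA_add_left, hB.innerA_mul_add_I_smul_mul_apply_self hA,
      hC.innerA_mul_add_I_smul_mul_apply_self hA]
    rfl
  have hbdd : ∀ x, normA A x = 1 →
      ‖innerA A (T x) x‖ ≤ (‖Bs * B‖ + ‖Cs * C‖) + (‖B * Bs‖ + ‖C * Cs‖) := by
    intro x hx
    refine (Complex.norm_le_abs_re_add_abs_im _).trans ?_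
    rw [hval, abs_of_nonneg (by positivity), abs_of_nonneg (by positivity)]
    exact add_le_add
      (add_le_add (hB.normA_apply_sq_le_norm_mul hA hx) (hC.normA_apply_sq_le_norm_mul hA hx))
      (add_le_add ((hB.symm hA.isSelfAdjoint).normA_apply_sq_le_norm_mul hA hx)
        ((hC.symm hA.isSelfAdjoint).normA_apply_sq_le_norm_mul hA hx))
  refine wAe_sq_le (exists_normA_eq_one hA hA0) fun x hx => ?_
  refine (le_inv_sqrt_two_mul_norm (by positivity) ?_ ?_).trans
    (mul_le_mul_of_nonneg_left (norm_innerA_le_wA hbdd hx) (by positivity))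
  · rw [hval]
    exact add_le_add (sq_norm_innerA_apply_self_le hA B hx) (sq_norm_innerA_apply_self_le hA C hx)
  · rw [hval]
    exact add_le_add (hB.sq_norm_innerA_apply_self_le_adjoint hA hx)
      (hC.sq_norm_innerA_apply_self_le_adjoint hA hx)
end
end

section
/- Let T be a bounded linear operator on H admitting an A-adjoint T♯. Then (1/2)·‖Re_A(T²)‖_A + (1/2)·w_A(T)·| ‖Re_A(T)‖_A − ‖Im_A(T)‖_A | ≤ (w_A(T))². -/
noncomputable section

open scoped ComplexInnerProductSpace

variable {H : Type*} [NormedAddCommGroup H] [InnerProductSpace ℂ H] [CompleteSpace H]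

/-!
Write `A = B† B`, so that `⟨x, y⟩_A = ⟪B y, B x⟫` and `‖x‖_A = ‖B x‖`. The operators
`R = Re_A(T)` and `S = Im_A(T)` are `A`-selfadjoint with `⟨R x, x⟩_A = Re ⟨T x, x⟩_A` and
`⟨S x, x⟩_A = Im ⟨T x, x⟩_A`. For an `A`-selfadjoint `C`, polarization bounds `‖C‖_A` by
`sup |⟨C x, x⟩_A|`; hence `‖R‖_A, ‖S‖_A ≤ w_A(T)`. Moreover `Re_A(T²) = R² - S²` is `A`-selfadjoint
with `⟨(R² - S²) x, x⟩_A = ‖R x‖_A² - ‖S x‖_A²`, so `‖Re_A(T²)‖_A ≤ max(‖R‖_A², ‖S‖_A²) ≤ w_A(T)²`,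
while `|‖R‖_A - ‖S‖_A| ≤ w_A(T)`. Reid's inequality `|⟨C x, x⟩_A| ≤ ‖C‖ ‖x‖_A²` for
`A`-selfadjoint `C`, obtained by iterating Cauchy–Schwarz along `C ^ 2 ^ n`, makes `w_A(T)` finite.
-/

open ContinuousLinearMap Filter

lemma le_of_forall_pow_two_pow_le_mul_pow_s4 {a b c : ℝ} (hb : 0 ≤ b)
    (h : ∀ n : ℕ, a ^ 2 ^ n ≤ c * b ^ 2 ^ n) : a ≤ b := by
  by_contra! hba
  have ha : 0 < a := hb.trans_lt hba
  have hlim : Tendsto (fun n : ℕ => c * (b / a) ^ 2 ^ n) atTop (nhds (c * 0)) :=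
    ((tendsto_pow_atTop_nhds_zero_of_lt_one (div_nonneg hb ha.le) ((div_lt_one ha).2 hba)).comp
      (tendsto_pow_atTop_atTop_of_one_lt one_lt_two)).const_mul c
  have hle : ∀ n : ℕ, 1 ≤ c * (b / a) ^ 2 ^ n := fun n => by
    rw [div_pow, mul_div_assoc', le_div_iff₀ (by positivity), one_mul]
    exact h n
  linarith [ge_of_tendsto' hlim hle]

lemma sSup_setOf_le {α : Type*} {p : α → Prop} {f : α → ℝ} {M : ℝ} (hne : ∃ x, p x)
    (h : ∀ x, p x → f x ≤ M) : sSup {r | ∃ x, p x ∧ r = f x} ≤ M := by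
  obtain ⟨x, hx⟩ := hne
  exact csSup_le ⟨_, x, hx, rfl⟩ (by rintro _ ⟨y, hy, rfl⟩; exact h y hy)

lemma le_sSup_setOf {α : Type*} {p : α → Prop} {f : α → ℝ} {M : ℝ}
    (h : ∀ x, p x → f x ≤ M) {x : α} (hx : p x) : f x ≤ sSup {r | ∃ x, p x ∧ r = f x} :=
  le_csSup ⟨M, by rintro _ ⟨y, hy, rfl⟩; exact h y hy⟩ ⟨x, hx, rfl⟩

lemma half_add_half_mul_abs_sub_le {a b w N : ℝ} (ha : 0 ≤ a) (hb : 0 ≤ b) (haw : a ≤ w)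
    (hbw : b ≤ w) (hN : N ≤ max (a ^ 2) (b ^ 2)) : 1 / 2 * N + 1 / 2 * w * |a - b| ≤ w ^ 2 := by
  have hmax : max (a ^ 2) (b ^ 2) ≤ w ^ 2 := max_le (by gcongr) (by gcongr)
  have hab : w * |a - b| ≤ w * w :=
    mul_le_mul_of_nonneg_left (abs_sub_le_of_nonneg_of_le ha haw hb hbw) (ha.trans haw)
  nlinarith

section SemiInnerProduct

variable {E : Type*} [NormedAddCommGroup E] [InnerProductSpace ℂ E]

lemma reA_mul_self (T Ts : E →L[ℂ] E) :
    ReA (T * T) (Ts * Ts) = ReA T Ts * ReA T Ts - ImA T Ts * ImA T Ts := by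
  have hI : (2 * Complex.I)⁻¹ * (2 * Complex.I)⁻¹ = -(4 : ℂ)⁻¹ := by
    rw [← mul_inv, mul_mul_mul_comm, Complex.I_mul_I]; norm_num
  simp only [ReA, ImA, smul_mul_smul_comm, hI, add_mul, mul_add, sub_mul, mul_sub]
  module

/-- `Ts` is an adjoint of `T` for the semi-inner product `⟪B x, B y⟫`; for `A = B† B` this is
the relation `A T♯ = T* A` (see `IsAdjointWrt.of_comp_eq`). -/
def IsAdjointWrt (B T Ts : E →L[ℂ] E) : Prop :=
  ∀ x y, ⟪B (T x), B y⟫ = ⟪B x, B (Ts y)⟫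

variable {B C : E →L[ℂ] E}

lemma norm_apply_smul_inv_norm_apply {u : E} (hu : B u ≠ 0) :
    ‖B ((‖B u‖ : ℂ)⁻¹ • u)‖ = 1 := by
  simp [norm_smul, hu]

lemma exists_norm_apply_eq_one (hB : B ≠ 0) : ∃ x, ‖B x‖ = 1 := by
  obtain ⟨u, hu⟩ := DFunLike.ne_iff.1 hB
  exact ⟨_, norm_apply_smul_inv_norm_apply hu⟩

lemma abs_re_inner_apply_le_of_unit {M : ℝ}
    (h : ∀ v, ‖B v‖ = 1 → |⟪B v, B (C v)⟫.re| ≤ M) (u : E) :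
    |⟪B u, B (C u)⟫.re| ≤ M * ‖B u‖ ^ 2 := by
  by_cases hu : B u = 0
  · simp [hu]
  have hv := h _ (norm_apply_smul_inv_norm_apply hu)
  have hscale : ⟪B ((‖B u‖ : ℂ)⁻¹ • u), B (C ((‖B u‖ : ℂ)⁻¹ • u))⟫
      = ((‖B u‖ ^ 2)⁻¹ : ℝ) * ⟪B u, B (C u)⟫ := by
    simp only [map_smul, inner_smul_left, inner_smul_right, map_inv₀, Complex.conj_ofReal]
    push_cast
    ring
  have hpos : 0 < ‖B u‖ := norm_pos_iff.2 hu
  rw [hscale, Complex.re_ofReal_mul, abs_mul, abs_of_pos (by positivity),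
    inv_mul_le_iff₀ (by positivity)] at hv
  linarith

namespace IsAdjointWrt

variable {T Ts U Us : E →L[ℂ] E}

lemma symm (hT : IsAdjointWrt B T Ts) : IsAdjointWrt B Ts T := fun x y => by
  rw [← inner_conj_symm, ← hT y x, inner_conj_symm]

lemma mul (hT : IsAdjointWrt B T Ts) (hU : IsAdjointWrt B U Us) :
    IsAdjointWrt B (T * U) (Us * Ts) := fun x y => by
  rw [mul_apply_eq_comp, hT, hU, mul_apply_eq_comp]

lemma pow (hT : IsAdjointWrt B T Ts) (n : ℕ) : IsAdjointWrt B (T ^ n) (Ts ^ n) := by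
  induction n with
  | zero => intro x y; simp
  | succ n ih => rw [pow_succ, pow_succ']; exact ih.mul hT

lemma sub (hT : IsAdjointWrt B T Ts) (hU : IsAdjointWrt B U Us) :
    IsAdjointWrt B (T - U) (Ts - Us) := fun x y => by
  simp [hT x y, hU x y]

lemma reA (hT : IsAdjointWrt B T Ts) : IsAdjointWrt B (ReA T Ts) (ReA T Ts) := fun x y => by
  simp only [ReA, smul_apply, add_apply, map_smul, map_add, inner_smul_left, inner_smul_right,
    inner_add_left, inner_add_right, hT x y, hT.symm x y, map_inv₀, map_ofNat]
  ring

lemma imA (hT : IsAdjointWrt B T Ts) : IsAdjointWrt B (ImA T Ts) (ImA T Ts) := fun x y => by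
  simp only [ImA, smul_apply, sub_apply, map_smul, map_sub, inner_smul_left, inner_smul_right,
    inner_sub_left, inner_sub_right, hT x y, hT.symm x y, map_inv₀, map_mul, Complex.conj_I,
    map_ofNat]
  ring

lemma inner_apply_adjoint (hT : IsAdjointWrt B T Ts) (x : E) :
    ⟪B x, B (Ts x)⟫ = starRingEnd ℂ ⟪B x, B (T x)⟫ := by
  rw [← hT, inner_conj_symm]

lemma inner_reA_apply (hT : IsAdjointWrt B T Ts) (x : E) :
    ⟪B x, B (ReA T Ts x)⟫ = (⟪B x, B (T x)⟫.re : ℂ) := by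
  simp only [ReA, smul_apply, add_apply, map_smul, map_add, inner_smul_right, inner_add_right,
    hT.inner_apply_adjoint, Complex.add_conj]
  push_cast
  ring

lemma inner_imA_apply (hT : IsAdjointWrt B T Ts) (x : E) :
    ⟪B x, B (ImA T Ts x)⟫ = (⟪B x, B (T x)⟫.im : ℂ) := by
  simp only [ImA, smul_apply, sub_apply, map_smul, map_sub, inner_smul_right, inner_sub_right,
    hT.inner_apply_adjoint, Complex.sub_conj]
  field_simp
  push_cast
  ring

lemma inner_mul_self_apply (hC : IsAdjointWrt B C C) (x : E) :
    ⟪B x, B ((C * C) x)⟫ = (‖B (C x)‖ ^ 2 : ℝ) := by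
  rw [mul_apply_eq_comp, ← hC, inner_self_eq_norm_sq_to_K]
  push_cast; rfl

lemma re_inner_add_sub (hC : IsAdjointWrt B C C) (x y : E) :
    ⟪B (x + y), B (C (x + y))⟫.re - ⟪B (x - y), B (C (x - y))⟫.re
      = 4 * ⟪B y, B (C x)⟫.re := by
  have hxy : ⟪B x, B (C y)⟫ = starRingEnd ℂ ⟪B y, B (C x)⟫ := by
    rw [← hC, inner_conj_symm]
  simp only [map_add, map_sub, inner_add_left, inner_add_right, inner_sub_left, inner_sub_right,
    Complex.add_re, Complex.sub_re, hxy, Complex.conj_re]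
  ring

lemma norm_apply_le_of_unit (hC : IsAdjointWrt B C C) {M : ℝ}
    (h : ∀ v, ‖B v‖ = 1 → |⟪B v, B (C v)⟫.re| ≤ M) {x : E} (hx : ‖B x‖ = 1) :
    ‖B (C x)‖ ≤ M := by
  by_cases hCx : B (C x) = 0
  · simpa [hCx] using (abs_nonneg _).trans (h x hx)
  set y := (‖B (C x)‖ : ℂ)⁻¹ • C x
  have hy : ‖B y‖ = 1 := norm_apply_smul_inv_norm_apply hCx
  have hyCx : ⟪B y, B (C x)⟫.re = ‖B (C x)‖ := by
    simp [y, inner_self_eq_norm_sq_to_K, pow_two, hCx]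
  have hpar := parallelogram_law_with_norm ℂ (B x) (B y)
  rw [← map_add, ← map_sub, hx, hy] at hpar
  have hadd := (abs_le.1 (abs_re_inner_apply_le_of_unit h (x + y))).2
  have hsub := (abs_le.1 (abs_re_inner_apply_le_of_unit h (x - y))).1
  have hM : M * ‖B (x + y)‖ ^ 2 + M * ‖B (x - y)‖ ^ 2 = 4 * M := by
    rw [← mul_add, hpar]; ring
  linarith [hC.re_inner_add_sub x y]

lemma norm_inner_apply_le (hC : IsAdjointWrt B C C) {x : E} (hx : ‖B x‖ = 1) :
    ‖⟪B x, B (C x)⟫‖ ≤ ‖C‖ := by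
  set u : ℕ → ℝ := fun n => ‖⟪B x, B ((C ^ 2 ^ n) x)⟫‖
  have hsq : ∀ n, u n ^ 2 ≤ u (n + 1) := fun n => calc
    u n ^ 2 ≤ ‖B ((C ^ 2 ^ n) x)‖ ^ 2 := by
      gcongr
      exact (norm_inner_le_norm (𝕜 := ℂ) _ _).trans_eq (by rw [hx, one_mul])
    _ = ⟪B x, B ((C ^ 2 ^ n * C ^ 2 ^ n) x)⟫.re := by
      rw [(hC.pow _).inner_mul_self_apply, Complex.ofReal_re]
    _ ≤ u (n + 1) := by
      rw [← pow_add, ← two_mul, ← pow_succ']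
      exact Complex.re_le_norm _
  have hpow : ∀ n, u 0 ^ 2 ^ n ≤ u n := by
    intro n
    induction n with
    | zero => simp
    | succ n ih => calc
        u 0 ^ 2 ^ (n + 1) = (u 0 ^ 2 ^ n) ^ 2 := by rw [pow_succ, pow_mul]
        _ ≤ u n ^ 2 := by gcongr
        _ ≤ u (n + 1) := hsq n
  have hgrow : ∀ n, u n ≤ (‖B‖ * ‖x‖) * ‖C‖ ^ 2 ^ n := fun n => calc
    u n ≤ ‖B x‖ * ‖B ((C ^ 2 ^ n) x)‖ := norm_inner_le_norm _ _
    _ ≤ 1 * (‖B‖ * (‖C ^ 2 ^ n‖ * ‖x‖)) := by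
      rw [hx]; gcongr; exact B.le_opNorm_of_le ((C ^ 2 ^ n).le_opNorm x)
    _ ≤ (‖B‖ * ‖x‖) * ‖C‖ ^ 2 ^ n := by
      rw [one_mul, mul_left_comm, mul_comm (‖C ^ 2 ^ n‖)]
      gcongr
      exact norm_pow_le' C (by positivity)
  simpa [u] using le_of_forall_pow_two_pow_le_mul_pow_s4 (norm_nonneg C)
    (fun n => (hpow n).trans (hgrow n))

end IsAdjointWrt

end SemiInnerProduct

section PositiveOperator

variable {B T Ts C : H →L[ℂ] H}

lemma IsAdjointWrt.of_comp_eq (h : (star B * B).comp Ts = (adjoint T).comp (star B * B)) :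
    IsAdjointWrt B T Ts := fun x y => by
  simpa [star_eq_adjoint, adjoint_inner_right] using (congrArg (fun S => ⟪x, S y⟫) h).symm

lemma innerA_star_mul_self (x y : H) : innerA (star B * B) x y = ⟪B y, B x⟫ := by
  rw [innerA, star_eq_adjoint, mul_apply_eq_comp, adjoint_inner_right]

lemma normA_star_mul_self (x : H) : normA (star B * B) x = ‖B x‖ := by
  rw [normA, innerA_star_mul_self, inner_self_eq_norm_sq_to_K]
  norm_cast
  exact Real.sqrt_sq (norm_nonneg _)

lemma wA_star_mul_self (T : H →L[ℂ] H) :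
    wA (star B * B) T = sSup {r | ∃ x, ‖B x‖ = 1 ∧ r = ‖⟪B x, B (T x)⟫‖} := by
  simp only [wA, normA_star_mul_self, innerA_star_mul_self]

lemma opNormA_star_mul_self (T : H →L[ℂ] H) :
    opNormA (star B * B) T = sSup {r | ∃ x, ‖B x‖ = 1 ∧ r = ‖B (T x)‖} := by
  simp only [opNormA, normA_star_mul_self]

namespace IsAdjointWrt

lemma norm_inner_apply_le_wA (hT : IsAdjointWrt B T Ts) {x : H} (hx : ‖B x‖ = 1) :
    ‖⟪B x, B (T x)⟫‖ ≤ wA (star B * B) T := by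
  rw [wA_star_mul_self]
  -- without this bound the `sSup` defining `wA` would be the junk value `0`
  refine le_sSup_setOf (p := fun v => ‖B v‖ = 1) (f := fun v => ‖⟪B v, B (T v)⟫‖)
    (M := ‖ReA T Ts‖ + ‖ImA T Ts‖) (fun v hv => ?_) hx
  calc ‖⟪B v, B (T v)⟫‖ ≤ |⟪B v, B (T v)⟫.re| + |⟪B v, B (T v)⟫.im| :=
        Complex.norm_le_abs_re_add_abs_im _
    _ = ‖⟪B v, B (ReA T Ts v)⟫‖ + ‖⟪B v, B (ImA T Ts v)⟫‖ := by
        rw [hT.inner_reA_apply, hT.inner_imA_apply, Complex.norm_real, Complex.norm_real,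
          Real.norm_eq_abs, Real.norm_eq_abs]
    _ ≤ ‖ReA T Ts‖ + ‖ImA T Ts‖ :=
        add_le_add (hT.reA.norm_inner_apply_le hv) (hT.imA.norm_inner_apply_le hv)

lemma abs_re_inner_reA_apply_le_wA (hT : IsAdjointWrt B T Ts) {x : H} (hx : ‖B x‖ = 1) :
    |⟪B x, B (ReA T Ts x)⟫.re| ≤ wA (star B * B) T := by
  rw [hT.inner_reA_apply, Complex.ofReal_re]
  exact (Complex.abs_re_le_norm _).trans (hT.norm_inner_apply_le_wA hx)

lemma abs_re_inner_imA_apply_le_wA (hT : IsAdjointWrt B T Ts) {x : H} (hx : ‖B x‖ = 1) :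
    |⟪B x, B (ImA T Ts x)⟫.re| ≤ wA (star B * B) T := by
  rw [hT.inner_imA_apply, Complex.ofReal_re]
  exact (Complex.abs_im_le_norm _).trans (hT.norm_inner_apply_le_wA hx)

lemma norm_apply_le_opNormA (hC : IsAdjointWrt B C C) {M : ℝ}
    (h : ∀ v, ‖B v‖ = 1 → |⟪B v, B (C v)⟫.re| ≤ M) {x : H} (hx : ‖B x‖ = 1) :
    ‖B (C x)‖ ≤ opNormA (star B * B) C := by
  rw [opNormA_star_mul_self]
  exact le_sSup_setOf (p := fun v => ‖B v‖ = 1) (f := fun v => ‖B (C v)‖)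
    (fun v hv => hC.norm_apply_le_of_unit h hv) hx

lemma opNormA_le (hC : IsAdjointWrt B C C) (hne : ∃ x, ‖B x‖ = 1) {M : ℝ}
    (h : ∀ v, ‖B v‖ = 1 → |⟪B v, B (C v)⟫.re| ≤ M) : opNormA (star B * B) C ≤ M := by
  rw [opNormA_star_mul_self]
  exact sSup_setOf_le hne (fun v hv => hC.norm_apply_le_of_unit h hv)

lemma opNormA_reA_mul_self_le (hT : IsAdjointWrt B T Ts) (hne : ∃ x, ‖B x‖ = 1) :
    opNormA (star B * B) (ReA (T * T) (Ts * Ts))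
      ≤ max (opNormA (star B * B) (ReA T Ts) ^ 2) (opNormA (star B * B) (ImA T Ts) ^ 2) := by
  rw [reA_mul_self]
  refine ((hT.reA.mul hT.reA).sub (hT.imA.mul hT.imA)).opNormA_le hne fun v hv => ?_
  rw [sub_apply, map_sub, inner_sub_right, hT.reA.inner_mul_self_apply,
    hT.imA.inner_mul_self_apply, ← Complex.ofReal_sub, Complex.ofReal_re]
  have hR := hT.reA.norm_apply_le_opNormA (fun _ hw => hT.abs_re_inner_reA_apply_le_wA hw) hv
  have hS := hT.imA.norm_apply_le_opNormA (fun _ hw => hT.abs_re_inner_imA_apply_le_wA hw) hv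
  exact abs_sub_le_of_nonneg_of_le (sq_nonneg _)
    ((pow_le_pow_left₀ (norm_nonneg _) hR 2).trans (le_max_left _ _)) (sq_nonneg _)
    ((pow_le_pow_left₀ (norm_nonneg _) hS 2).trans (le_max_right _ _))

end IsAdjointWrt

end PositiveOperator

theorem stmt4 (A : H →L[ℂ] H) (hA : A.IsPositive) (hA0 : A ≠ 0)
    (T Ts : H →L[ℂ] H)
    (hT : A.comp Ts = (ContinuousLinearMap.adjoint T).comp A) :
    (1/2) * opNormA A (ReA (T * T) (Ts * Ts))
      + (1/2) * wA A T * |opNormA A (ReA T Ts) - opNormA A (ImA T Ts)|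
      ≤ (wA A T)^2 := by
  obtain ⟨B, rfl⟩ := CStarAlgebra.nonneg_iff_eq_star_mul_self.1 ((nonneg_iff_isPositive A).2 hA)
  have hTs : IsAdjointWrt B T Ts := .of_comp_eq hT
  obtain ⟨x₀, hx₀⟩ := exists_norm_apply_eq_one (B := B) (by rintro rfl; simp at hA0)
  have hR := fun v (hv : ‖B v‖ = 1) => hTs.abs_re_inner_reA_apply_le_wA hv
  have hS := fun v (hv : ‖B v‖ = 1) => hTs.abs_re_inner_imA_apply_le_wA hv
  exact half_add_half_mul_abs_sub_le
    ((norm_nonneg _).trans (hTs.reA.norm_apply_le_opNormA hR hx₀))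
    ((norm_nonneg _).trans (hTs.imA.norm_apply_le_opNormA hS hx₀))
    (hTs.reA.opNormA_le ⟨x₀, hx₀⟩ hR) (hTs.imA.opNormA_le ⟨x₀, hx₀⟩ hS)
    (hTs.opNormA_reA_mul_self_le ⟨x₀, hx₀⟩)
end
end
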